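/- Let m ≥ 1 be an integer, a > 0, ν ∈ ℝ, and let H(z) = a((2Re(e^{iν}z))^{2m} − 2Re((e^{iν}z)^{2m})) for z ∈ ℂ. Then H is a real-valued homogeneous polynomial of degree 2m containing no harmonic terms, and the map Φ(z₁,z₂) = (2a^{1/(2m)} e^{iν} z₁, z₂ − 2a(e^{iν}z₁)^{2m}) is a biholomorphism from M_H = {(z₁,z₂) ∈ ℂ² : Re z₂ + H(z₁) < 0} onto Ω_m = {(z₁,z₂) ∈ ℂ² : Re z₂ + (Re z₁)^{2m} < 0}. -/

import Mathlib

open Complex Finset Metric Filter Topology Asymptotics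
open scoped ENNReal NNReal

noncomputable section

/-- `Hpoly m a z = Σ_{j=1}^{2m-1} a_{2m-j} z^j conj(z)^{2m-j}`. -/
def Hpoly (m : ℕ) (a : ℕ → ℂ) (z : ℂ) : ℂ :=
  ∑ j ∈ Finset.Icc 1 (2 * m - 1), a (2 * m - j) * z ^ j * (starRingEnd ℂ z) ^ (2 * m - j)

/-- The coefficients `a` give a real-valued polynomial that is not identically zero. -/
def GoodCoeff (m : ℕ) (a : ℕ → ℂ) : Prop :=
  (∀ j ∈ Finset.Icc 1 (2 * m - 1), a j = starRingEnd ℂ (a (2 * m - j))) ∧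
  (∃ j ∈ Finset.Icc 1 (2 * m - 1), a j ≠ 0)

/-- Subharmonicity: the Laplacian is a nonnegative real number at every point. -/
def SubharmonicCoeff (m : ℕ) (a : ℕ → ℂ) : Prop :=
  ∀ z : ℂ,
    ((4 : ℂ) * ∑ j ∈ Finset.Icc 1 (2 * m - 1),
      (j : ℂ) * ((2 * m - j : ℕ) : ℂ) * a (2 * m - j) * z ^ (j - 1) *
        (starRingEnd ℂ z) ^ (2 * m - j - 1)).im = 0 ∧
    0 ≤ ((4 : ℂ) * ∑ j ∈ Finset.Icc 1 (2 * m - 1),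
      (j : ℂ) * ((2 * m - j : ℕ) : ℂ) * a (2 * m - j) * z ^ (j - 1) *
        (starRingEnd ℂ z) ^ (2 * m - j - 1)).re

/-- The model domain `M_H`. -/
def modelM (H : ℂ → ℝ) : Set (ℂ × ℂ) := {z : ℂ × ℂ | z.2.re + H z.1 < 0}

/-- The tube domain `Ω_m`. -/
def OmegaM (m : ℕ) : Set (ℂ × ℂ) := {z : ℂ × ℂ | z.2.re + z.1.re ^ (2 * m) < 0}

/-- `f` is a biholomorphism from `Ω₁` onto `Ω₂`. -/
def IsBiholoOn (Ω₁ Ω₂ : Set (ℂ × ℂ)) (f : ℂ × ℂ → ℂ × ℂ) : Prop :=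
  DifferentiableOn ℂ f Ω₁ ∧ Set.MapsTo f Ω₁ Ω₂ ∧
    ∃ g : ℂ × ℂ → ℂ × ℂ, DifferentiableOn ℂ g Ω₂ ∧ Set.MapsTo g Ω₂ Ω₁ ∧
      (∀ z ∈ Ω₁, g (f z) = z) ∧ (∀ w ∈ Ω₂, f (g w) = w)

/-- `f` is an automorphism of `Ω`. -/
def IsAutomorphismOf (Ω : Set (ℂ × ℂ)) (f : ℂ × ℂ → ℂ × ℂ) : Prop :=
  IsBiholoOn Ω Ω f

/-- Mixed Wirtinger derivative `H_{j,q̄}`. -/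
def Hmix (m : ℕ) (a : ℕ → ℂ) (j q : ℕ) (z : ℂ) : ℂ :=
  ∑ k ∈ (Finset.Icc j (2 * m - 1)).filter (fun k => q ≤ 2 * m - k),
    a (2 * m - k) * (k.descFactorial j : ℂ) * ((2 * m - k).descFactorial q : ℂ) *
      z ^ (k - j) * (starRingEnd ℂ z) ^ (2 * m - k - q)

/-- Holomorphic Wirtinger derivative `H_j`. -/
def Hhol (m : ℕ) (a : ℕ → ℂ) (j : ℕ) (z : ℂ) : ℂ :=
  ∑ k ∈ Finset.Icc j (2 * m - 1),
    a (2 * m - k) * (k.descFactorial j : ℂ) * z ^ (k - j) * (starRingEnd ℂ z) ^ (2 * m - k)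

/-- `ε(a) = |Re a₂ + H(a₁)|`. -/
def epsAt (H : ℂ → ℝ) (p : ℂ × ℂ) : ℝ := |p.2.re + H p.1|

/-- The `(j,q)` coefficient of the rescaled polynomial `H_{a,τ}`. -/
def scaledCoeff (m : ℕ) (a : ℕ → ℂ) (H : ℂ → ℝ) (p : ℂ × ℂ) (τ : ℝ) (j q : ℕ) : ℂ :=
  Hmix m a j q p.1 * (τ : ℂ) ^ (j + q) /
    ((j.factorial : ℂ) * (q.factorial : ℂ) * (epsAt H p : ℂ))

/-- Index pairs `(j,q)` with `j, q ≥ 1` and `j + q ≤ 2m`. -/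
def coeffPairs (m : ℕ) : Finset (ℕ × ℕ) :=
  (Finset.Icc 1 (2 * m) ×ˢ Finset.Icc 1 (2 * m)).filter (fun jq => jq.1 + jq.2 ≤ 2 * m)

/-- `‖H_{a,τ}‖`, the maximum modulus of the coefficients of the rescaled polynomial. -/
def HscaledNorm (m : ℕ) (a : ℕ → ℂ) (H : ℂ → ℝ) (p : ℂ × ℂ) (τ : ℝ) : ℝ :=
  (((coeffPairs m).sup fun jq =>
    Real.toNNReal ‖scaledCoeff m a H p τ jq.1 jq.2‖) : ℝ≥0)

/-- Vanishing order at `0 ∈ ℂ` of a map, via big-O estimates. -/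
def vOrder {E : Type*} [NormedAddCommGroup E] (u : ℂ → E) : ℝ≥0∞ :=
  sSup {c : ℝ≥0∞ | ∃ k : ℕ, c = (k : ℝ≥0∞) ∧ u =O[𝓝 (0 : ℂ)] fun z : ℂ => ‖z‖ ^ k}

/-- The D'Angelo type of `∂M_H` at `p`. -/
def dAngeloType (H : ℂ → ℝ) (p : ℂ × ℂ) : ℝ≥0∞ :=
  ⨆ (γ : ℂ → ℂ × ℂ) (_ : ∃ r > 0, DifferentiableOn ℂ γ (Metric.ball 0 r) ∧
      γ 0 = p ∧ ¬ ∀ z ∈ Metric.ball (0 : ℂ) r, γ z = p),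
    vOrder (fun t => ((γ t).2.re + H (γ t).1 : ℝ)) / vOrder (fun t => γ t - p)

/-!
Put `w = e^{iν} z`. Since `2 Re w = w + w̄`, the binomial theorem gives
`H(z) = A((w + w̄)^{2m} - w^{2m} - w̄^{2m}) = A Σ_{0<j<2m} C(2m, j) w^j w̄^{2m-j}`, a real
homogeneous polynomial whose pure terms `w^{2m}`, `w̄^{2m}` have cancelled. The map `Φ` is a
shear composed with a linear map, with polynomial inverse, and it carries the defining function of
`M_H` to that of `Ω_m`: with `r^{2m} = A`,
`Re(z₂ - 2A w^{2m}) + (2r Re w)^{2m} = Re z₂ + A((2 Re w)^{2m} - 2 Re w^{2m})`.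
-/

theorem add_pow_sub_pow_sub_pow {R : Type*} [CommRing R] (x y : R) {n : ℕ} (hn : n ≠ 0) :
    (x + y) ^ n - x ^ n - y ^ n =
      ∑ j ∈ Icc 1 (n - 1), x ^ j * y ^ (n - j) * (n.choose j : R) := by
  have hIco : Ico 1 n = Icc 1 (n - 1) := by ext; simp only [mem_Ico, mem_Icc]; omega
  rw [add_pow, range_eq_Ico, sum_eq_sum_Ico_succ_bot (Nat.succ_pos n),
    sum_Ico_succ_top (Nat.one_le_iff_ne_zero.mpr hn), hIco]
  simp only [pow_zero, Nat.sub_zero, Nat.choose_zero_right, Nat.sub_self, Nat.choose_self,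
    Nat.cast_one, mul_one, one_mul]
  ring

theorem ofReal_two_mul_re_pow_sub (w : ℂ) (n : ℕ) :
    (((2 * w.re) ^ n - 2 * (w ^ n).re : ℝ) : ℂ) =
      (w + starRingEnd ℂ w) ^ n - w ^ n - starRingEnd ℂ w ^ n := by
  rw [add_conj, ← map_pow, sub_sub, add_conj]
  push_cast
  ring

/-- The coefficients of `A((2 Re(e z))^{2m} - 2 Re((e z)^{2m}))` in the basis `zʲ z̄^{2m-j}`,
indexed as in `Hpoly` (the coefficient of `zʲ z̄^{2m-j}` is `c (2m - j)`). -/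
def rotatedBinomialCoeff (m : ℕ) (A : ℝ) (e : ℂ) (k : ℕ) : ℂ :=
  A * ((2 * m).choose k : ℂ) * e ^ (2 * m - k) * starRingEnd ℂ e ^ k

theorem goodCoeff_rotatedBinomialCoeff {m : ℕ} (hm : 0 < m) {A : ℝ} (hA : A ≠ 0) {e : ℂ}
    (he : e ≠ 0) : GoodCoeff m (rotatedBinomialCoeff m A e) := by
  refine ⟨fun j hj => ?_, 1, by simp only [mem_Icc]; omega, ?_⟩
  · have hj' : j ≤ 2 * m := by simp only [mem_Icc] at hj; omega
    simp only [rotatedBinomialCoeff, map_mul, map_pow, conj_conj, conj_ofReal, map_natCast,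
      Nat.sub_sub_self hj', Nat.choose_symm hj']
    ring
  · have hchoose : ((2 * m).choose 1 : ℂ) ≠ 0 := by
      rw [Nat.choose_one_right]
      exact_mod_cast (by omega : 2 * m ≠ 0)
    simp only [rotatedBinomialCoeff, pow_one]
    exact mul_ne_zero (mul_ne_zero (mul_ne_zero (ofReal_ne_zero.mpr hA) hchoose)
      (pow_ne_zero _ he)) ((map_ne_zero _).mpr he)

theorem hpoly_rotatedBinomialCoeff {m : ℕ} (hm : 0 < m) (A : ℝ) (e z : ℂ) :
    Hpoly m (rotatedBinomialCoeff m A e) z =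
      A * (((e * z + starRingEnd ℂ (e * z)) ^ (2 * m) - (e * z) ^ (2 * m)
        - starRingEnd ℂ (e * z) ^ (2 * m))) := by
  rw [add_pow_sub_pow_sub_pow _ _ (by omega : 2 * m ≠ 0), mul_sum, Hpoly]
  refine sum_congr rfl fun j hj => ?_
  have hj' : j ≤ 2 * m := by simp only [mem_Icc] at hj; omega
  simp only [rotatedBinomialCoeff, Nat.sub_sub_self hj', Nat.choose_symm hj', map_mul, mul_pow]
  ring

theorem isBiholoOn_preimage {f g : ℂ × ℂ → ℂ × ℂ} (hf : Differentiable ℂ f)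
    (hg : Differentiable ℂ g) (hgf : Function.LeftInverse g f) (hfg : Function.RightInverse g f)
    (Ω : Set (ℂ × ℂ)) : IsBiholoOn (f ⁻¹' Ω) Ω f :=
  ⟨hf.differentiableOn, fun _ hz => hz, g, hg.differentiableOn,
    fun w hw => by simpa only [Set.mem_preimage, hfg w] using hw, fun z _ => hgf z,
    fun w _ => hfg w⟩

def shearMap (c : ℂ) (P : ℂ → ℂ) (z : ℂ × ℂ) : ℂ × ℂ := (c * z.1, z.2 - P z.1)

theorem isBiholoOn_shearMap_preimage {c : ℂ} (hc : c ≠ 0) {P : ℂ → ℂ}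
    (hP : Differentiable ℂ P) (Ω : Set (ℂ × ℂ)) :
    IsBiholoOn (shearMap c P ⁻¹' Ω) Ω (shearMap c P) := by
  let g : ℂ × ℂ → ℂ × ℂ := fun w => (c⁻¹ * w.1, w.2 + P (c⁻¹ * w.1))
  refine isBiholoOn_preimage ?_ (g := g) ?_ (fun z => ?_) (fun w => ?_) Ω
  · exact (differentiable_fst.const_mul c).prodMk
      (differentiable_snd.sub (hP.comp differentiable_fst))
  · exact (differentiable_fst.const_mul c⁻¹).prodMk
      (differentiable_snd.add (hP.comp (differentiable_fst.const_mul c⁻¹)))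
  · simp only [g, shearMap, inv_mul_cancel_left₀ hc, sub_add_cancel]
  · simp only [g, shearMap, mul_inv_cancel_left₀ hc, add_sub_cancel_right]

theorem rpow_one_div_two_mul_pow {A : ℝ} (hA : 0 ≤ A) {m : ℕ} (hm : 0 < m) :
    (A ^ ((1 : ℝ) / (2 * (m : ℝ)))) ^ (2 * m) = A := by
  have h := Real.rpow_inv_natCast_pow hA (by omega : 2 * m ≠ 0)
  rwa [Nat.cast_mul, Nat.cast_two, ← one_div] at h

theorem modelM_eq_shearMap_preimage {m : ℕ} (hm : 0 < m) {A : ℝ} (hA : 0 ≤ A) {e : ℂ}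
    {H : ℂ → ℝ}
    (hH : ∀ z, H z = A * ((2 * (e * z).re) ^ (2 * m) - 2 * ((e * z) ^ (2 * m)).re)) :
    modelM H = shearMap (2 * ((A ^ ((1 : ℝ) / (2 * (m : ℝ))) : ℝ) : ℂ) * e)
      (fun u => 2 * A * (e * u) ^ (2 * m)) ⁻¹' OmegaM m := by
  set r := A ^ ((1 : ℝ) / (2 * (m : ℝ)))
  ext z
  have hre : (2 * (r : ℂ) * e * z.1).re = 2 * r * (e * z.1).re := by
    rw [mul_assoc, ← ofReal_ofNat, ← ofReal_mul, re_ofReal_mul]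
  have hre' : (2 * (A : ℂ) * (e * z.1) ^ (2 * m)).re = 2 * A * ((e * z.1) ^ (2 * m)).re := by
    rw [← ofReal_ofNat, ← ofReal_mul, re_ofReal_mul]
  have hpow : (2 * r * (e * z.1).re) ^ (2 * m) = A * (2 * (e * z.1).re) ^ (2 * m) := by
    rw [mul_pow, mul_pow, mul_pow, (rpow_one_div_two_mul_pow hA hm : r ^ (2 * m) = A)]
    ring
  simp only [modelM, OmegaM, shearMap, Set.mem_ofPred_eq, Set.mem_preimage, sub_re, hre, hre',
    hpow, hH]
  rw [iff_iff_eq]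
  congr 1
  ring

/-- `H(z) = a((2Re(e^{iν}z))^{2m} − 2Re((e^{iν}z)^{2m}))` is a real-valued
homogeneous polynomial of degree `2m` with no harmonic terms, and
`Φ(z₁,z₂) = (2a^{1/(2m)}e^{iν}z₁, z₂ − 2a(e^{iν}z₁)^{2m})` is a biholomorphism from `M_H`
onto `Ω_m`. -/
theorem statement_11 (m : ℕ) (hm : 1 ≤ m) (A : ℝ) (hA : 0 < A) (ν : ℝ)
    (H : ℂ → ℝ)
    (hHdef : ∀ z : ℂ, H z = A * ((2 * (Complex.exp (Complex.I * ν) * z).re) ^ (2 * m)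
      - 2 * ((Complex.exp (Complex.I * ν) * z) ^ (2 * m)).re)) :
    (∃ c : ℕ → ℂ, GoodCoeff m c ∧ ∀ z : ℂ, (H z : ℂ) = Hpoly m c z) ∧
    IsBiholoOn (modelM H) (OmegaM m)
      (fun z => (2 * ((A ^ ((1 : ℝ) / (2 * (m : ℝ))) : ℝ) : ℂ) *
          Complex.exp (Complex.I * ν) * z.1,
        z.2 - 2 * (A : ℂ) * (Complex.exp (Complex.I * ν) * z.1) ^ (2 * m))) := by
  set e := Complex.exp (Complex.I * ν)
  set r := A ^ ((1 : ℝ) / (2 * (m : ℝ)))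
  refine ⟨⟨rotatedBinomialCoeff m A e, goodCoeff_rotatedBinomialCoeff hm hA.ne' (exp_ne_zero _),
    fun z => ?_⟩, ?_⟩
  · rw [hpoly_rotatedBinomialCoeff hm, hHdef, ← ofReal_two_mul_re_pow_sub]
    push_cast
    rfl
  have hP : Differentiable ℂ fun u : ℂ => 2 * (A : ℂ) * (e * u) ^ (2 * m) := by fun_prop
  have hc : 2 * (r : ℂ) * e ≠ 0 :=
    mul_ne_zero (mul_ne_zero two_ne_zero (ofReal_ne_zero.mpr (Real.rpow_pos_of_pos hA _).ne'))
      (exp_ne_zero _)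
  rw [modelM_eq_shearMap_preimage hm hA.le hHdef]
  exact isBiholoOn_shearMap_preimage hc hP (OmegaM m)

end
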